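/- Let A be a finite poset, H a Hilbert space, and (H_a)_{a∈A} a decomposable monotone family of closed subspaces of H; let π_a be the orthogonal projection onto H_a and s_a^⊥ the orthogonal projection onto S_a := H_a ∩ ⋂_{b∈A, b<a} H_b^⊥. Then for every a ∈ A, s_a^⊥ = Σ_{b≤a} μ(b, a)·π_b, where μ is the Möbius function of the incidence algebra of A (the inverse of the zeta function, so that this identity is the Möbius inversion of π_a = Σ_{b≤a} s_b^⊥). -/

import Mathlib

open Submodule

variable {𝕜 E : Type*} [RCLike 𝕜] [NormedAddCommGroup E] [InnerProductSpace 𝕜 E]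
  [CompleteSpace E]

/-- The orthogonal projection of `E` onto the topological closure of `K`,
as a continuous linear map `E →L[𝕜] E`. -/
noncomputable def projC (K : Submodule 𝕜 E) : E →L[𝕜] E :=
  haveI : CompleteSpace K.topologicalClosure :=
    K.isClosed_topologicalClosure.completeSpace_coe
  K.topologicalClosure.subtypeL.comp (orthogonalProjection K.topologicalClosure)

/-- A monotone family `(H_a)_{a ∈ A}` of closed subspaces of `E` is decomposable if there is
a family `(S'_a)_{a ∈ A⁺}` of pairwise orthogonal closed subspaces whose total closed span is
`E` and whose partial closed spans over `{b ≤ a}` recover each `H_a`. -/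
def Decomposable {A : Type*} [PartialOrder A] (H : A → Submodule 𝕜 E) : Prop :=
  ∃ S : WithTop A → Submodule 𝕜 E,
    (∀ a, IsClosed ((S a : Submodule 𝕜 E) : Set E)) ∧
    (∀ a b, a ≠ b → ∀ u ∈ S a, ∀ v ∈ S b, (inner 𝕜 u v : 𝕜) = 0) ∧
    (⨆ a, S a).topologicalClosure = ⊤ ∧
    (∀ a : A, (⨆ b ∈ {b : A | b ≤ a}, S (b : WithTop A)).topologicalClosure = H a)

/-! Decomposability provides pairwise orthogonal closed subspaces `S'_b` such that `H_a` is the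
closed span of the `S'_b` with `b ≤ a`. Projections onto an orthogonal family add up, so
`π_a = Σ_{b ≤ a} π(S'_b)`; and `S_a = S'_a`, because a vector of `H_a` orthogonal to every `H_b`,
`b < a`, has no component in any `S'_b`, `b < a`. Möbius inversion of `π_a = Σ_{b ≤ a} s_b^⊥`
gives the formula. -/

open Finset

theorem IncidenceAlgebra.moebius_inversion_bot_zsmul {α M : Type*} [PartialOrder α] [Fintype α]
    [DecidableEq α] [DecidableLE α] [LocallyFiniteOrder α] [AddCommGroup M] (f g : α → M)
    (h : ∀ b, g b = ∑ c ∈ univ.filter (· ≤ b), f c) (a : α) :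
    f a = ∑ b ∈ univ.filter (· ≤ a), mu ℤ b a • g b := by
  symm
  calc ∑ b ∈ univ.filter (· ≤ a), mu ℤ b a • g b
      = ∑ b ∈ univ.filter (· ≤ a), ∑ c ∈ univ.filter (· ≤ b), mu ℤ b a • f c := by
        simp_rw [h, smul_sum]
    _ = ∑ c ∈ univ.filter (· ≤ a), ∑ b ∈ Icc c a, mu ℤ b a • f c :=
        sum_comm' fun b c => by
          simp only [mem_filter, mem_univ, true_and, mem_Icc]
          exact ⟨fun ⟨hba, hcb⟩ => ⟨⟨hcb, hba⟩, hcb.trans hba⟩, fun ⟨⟨hcb, hba⟩, _⟩ => ⟨hba, hcb⟩⟩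
    _ = ∑ c ∈ univ.filter (· ≤ a), if c = a then f c else 0 := by
        simp_rw [← sum_smul, sum_Icc_mu_left, ite_smul, one_smul, zero_smul]
    _ = f a := by simp

lemma Submodule.mem_orthogonal_biSup_iff {F ι : Type*} [NormedAddCommGroup F]
    [InnerProductSpace 𝕜 F] {s : Finset ι} {K : ι → Submodule 𝕜 F} {x : F} :
    x ∈ (⨆ i ∈ s, K i)ᗮ ↔ ∀ i ∈ s, x ∈ (K i)ᗮ := by
  simp only [← span_singleton_le_iff_mem, ← isOrtho_iff_le, isOrtho_iSup_right]

lemma projC_eq_starProjection (K : Submodule 𝕜 E) :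
    projC K = K.topologicalClosure.starProjection := rfl

lemma projC_apply_mem (K : Submodule 𝕜 E) (x : E) : projC K x ∈ K.topologicalClosure :=
  K.topologicalClosure.starProjection_apply_mem x

lemma sub_projC_apply_mem_orthogonal (K : Submodule 𝕜 E) (x : E) : x - projC K x ∈ Kᗮ := by
  rw [← orthogonal_closure]
  exact sub_starProjection_mem_orthogonal x

lemma projC_apply_eq_of_mem_of_sub_mem_orthogonal {K : Submodule 𝕜 E} {x y : E}
    (hy : y ∈ K.topologicalClosure) (hxy : x - y ∈ Kᗮ) : projC K x = y :=
  eq_starProjection_of_mem_orthogonal hy (by rwa [orthogonal_closure])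

lemma projC_apply_eq_self_iff {K : Submodule 𝕜 E} {x : E} :
    projC K x = x ↔ x ∈ K.topologicalClosure :=
  starProjection_eq_self_iff

lemma projC_apply_eq_zero_iff {K : Submodule 𝕜 E} {x : E} : projC K x = 0 ↔ x ∈ Kᗮ := by
  rw [projC_eq_starProjection, starProjection_apply_eq_zero_iff, orthogonal_closure]

lemma projC_topologicalClosure (K : Submodule 𝕜 E) : projC K.topologicalClosure = projC K := by
  simp only [projC_eq_starProjection, K.isClosed_topologicalClosure.submodule_topologicalClosure_eq]

lemma projC_biSup_eq_sum {ι : Type*} [DecidableEq ι] {S : ι → Submodule 𝕜 E}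
    (hS : ∀ i, IsClosed (S i : Set E)) (horth : Pairwise fun i j => S i ⟂ S j) (s : Finset ι) :
    projC (⨆ i ∈ s, S i) = ∑ i ∈ s, projC (S i) := by
  ext x
  have hmem : ∀ i, projC (S i) x ∈ S i := fun i => by
    simpa only [(hS i).submodule_topologicalClosure_eq] using projC_apply_mem (S i) x
  rw [_root_.sum_apply]
  refine projC_apply_eq_of_mem_of_sub_mem_orthogonal
    (le_topologicalClosure _ (sum_mem fun i hi => mem_iSup_of_mem i (mem_iSup_of_mem hi (hmem i))))
    (mem_orthogonal_biSup_iff.2 fun j hj => ?_)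
  rw [← add_sum_erase s _ hj, sub_add_eq_sub_sub]
  refine sub_mem (sub_projC_apply_mem_orthogonal _ _) (sum_mem fun i hi => ?_)
  exact (horth (ne_of_mem_erase hi)).le (hmem i)

lemma Decomposable.exists_orthogonal_family {F A : Type*} [NormedAddCommGroup F]
    [InnerProductSpace 𝕜 F] [PartialOrder A] [Fintype A] [DecidableLE A] {H : A → Submodule 𝕜 F}
    (hdec : Decomposable H) :
    ∃ S : A → Submodule 𝕜 F, (∀ a, IsClosed (S a : Set F)) ∧
      Pairwise (fun a b => S a ⟂ S b) ∧
      ∀ a, H a = (⨆ b ∈ univ.filter (· ≤ a), S b).topologicalClosure := by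
  obtain ⟨S, hclosed, horth, -, hspan⟩ := hdec
  refine ⟨fun a => S a, fun a => hclosed a,
    fun a b hab => isOrtho_iff_inner_eq.2 (horth a b (WithTop.coe_injective.ne hab)), fun a => ?_⟩
  rw [← hspan a]
  simp only [Set.mem_ofPred_eq, mem_filter, mem_univ, true_and]

section OrthogonalDecomposition

variable {A : Type*} [PartialOrder A] [Fintype A] [DecidableLE A] [DecidableEq A]
  {S H : A → Submodule 𝕜 E} (hS : ∀ a, IsClosed (S a : Set E))
  (horth : Pairwise fun a b => S a ⟂ S b)
  (hH : ∀ a, H a = (⨆ b ∈ univ.filter (· ≤ a), S b).topologicalClosure)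
include hS horth hH

lemma projC_eq_sum_projC_le (a : A) : projC (H a) = ∑ b ∈ univ.filter (· ≤ a), projC (S b) := by
  rw [hH, projC_topologicalClosure, projC_biSup_eq_sum hS horth]

lemma inf_iInf_orthogonal_eq (a : A) : H a ⊓ ⨅ b ∈ {b : A | b < a}, (H b)ᗮ = S a := by
  have hle : ∀ b, S b ≤ H b := fun b =>
    (hH b).symm ▸ (le_biSup S (by simp : b ∈ univ.filter (· ≤ b))).trans (le_topologicalClosure _)
  refine le_antisymm (fun x hx => ?_) (le_inf (hle a) (le_iInf₂ fun c hc => ?_))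
  · obtain ⟨hxa, hxlt⟩ := mem_inf.1 hx
    simp only [mem_iInf] at hxlt
    have hHa : IsClosed (H a : Set E) := (hH a).symm ▸ isClosed_topologicalClosure _
    have hsum : ∑ b ∈ univ.filter (· ≤ a), projC (S b) x = x := by
      rw [← _root_.sum_apply, ← projC_eq_sum_projC_le hS horth hH, projC_apply_eq_self_iff,
        hHa.submodule_topologicalClosure_eq]
      exact hxa
    rw [sum_eq_single_of_mem a (by simp) fun b hb hba => projC_apply_eq_zero_iff.2
      (orthogonal_le (hle b) (hxlt b (lt_of_le_of_ne (by simpa using hb) hba)))] at hsum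
    rw [← (hS a).submodule_topologicalClosure_eq, ← projC_apply_eq_self_iff]
    exact hsum
  · rw [hH, orthogonal_closure, ← isOrtho_iff_le]
    simp only [isOrtho_iSup_right, mem_filter, mem_univ, true_and]
    exact fun b hbc => horth (hbc.trans_lt hc).ne'

end OrthogonalDecomposition

theorem proj_interaction_eq_moebius_sum_general
    {A : Type*} [PartialOrder A] [Fintype A] [DecidableEq A]
    [DecidableRel ((· ≤ ·) : A → A → Prop)] [LocallyFiniteOrder A]
    (H : A → Submodule 𝕜 E)
    (hdec : Decomposable H) :
    ∀ a : A,
      projC (H a ⊓ ⨅ b ∈ {b : A | b < a}, (H b)ᗮ) =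
        ∑ b ∈ Finset.univ.filter (fun b => b ≤ a),
          (IncidenceAlgebra.mu ℤ b a) • projC (H b) := by
  obtain ⟨S, hS, horth, hH⟩ := hdec.exists_orthogonal_family
  intro a
  rw [inf_iInf_orthogonal_eq hS horth hH]
  exact IncidenceAlgebra.moebius_inversion_bot_zsmul (projC ∘ S) (projC ∘ H)
    (projC_eq_sum_projC_le hS horth hH) a

/-- For a decomposable monotone family of closed subspaces over a finite
poset `A`, the orthogonal projection `s_a^⊥` onto `S_a = H_a ∩ ⋂_{b < a} H_b^⊥` is given by
Möbius inversion of `π_a = Σ_{b ≤ a} s_b^⊥`:  `s_a^⊥ = Σ_{b ≤ a} μ(b, a) • π_b`, where `μ`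
is the Möbius function of the incidence algebra of `A`. -/
theorem proj_interaction_eq_moebius_sum
    {A : Type*} [PartialOrder A] [Fintype A] [DecidableEq A]
    [DecidableRel ((· ≤ ·) : A → A → Prop)] [LocallyFiniteOrder A]
    (H : A → Submodule 𝕜 E)
    (hclosed : ∀ a, IsClosed ((H a : Submodule 𝕜 E) : Set E))
    (hmono : Monotone H)
    (hdec : Decomposable H) :
    ∀ a : A,
      projC (H a ⊓ ⨅ b ∈ {b : A | b < a}, (H b)ᗮ) =
        ∑ b ∈ Finset.univ.filter (fun b => b ≤ a),
          (IncidenceAlgebra.mu ℤ b a) • projC (H b) :=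
  proj_interaction_eq_moebius_sum_general H hdec
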